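/- Every k-preserving closed ordered space (i.e., a closed preordered space with ≤ antisymmetric) whose topology is locally compact and σ-compact is convex and normally ordered. -/

import Mathlib

open Topology

/-- The increasing hull `i(S) = {y | ∃ x ∈ S, x ≤ y}`. -/
def incHull {E : Type*} [Preorder E] (S : Set E) : Set E := {y | ∃ x ∈ S, x ≤ y}

/-- The decreasing hull `d(S) = {y | ∃ x ∈ S, y ≤ x}`. -/
def decHull {E : Type*} [Preorder E] (S : Set E) : Set E := {y | ∃ x ∈ S, y ≤ x}

/-!
Local compactness, σ-compactness and k-preservation give an exhaustion of `E` by compact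
order-convex sets `K n ⊆ interior (K (n + 1))`. A compact closed preordered space is normally
ordered (Nachbin, by the tube lemma), and so is each `K n` with the induced order. Separating,
inside `K (n + 1)`, the lower hull of `A ∪ C n` from the upper hull of `B ∪ D n` yields compact
sets `C (n + 1)`, lower within `K (n + 1)` and with `C n` in its interior, and dually `D (n + 1)`;
the unions `⋃ C n` and `⋃ D n` are then open lower and open upper sets. Order-convexity of the
`K n` keeps these hulls from meeting outside the target set `O`. Normality is the case `O = ∅`;
convexity at `x` is the case `A = Iic x`, `B = Ici x`, with `O` shrunk into `K 0` and
antisymmetry giving `Iic x ∩ Ici x = {x}`.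
-/

open Set

def IsKPreserving (E : Type*) [TopologicalSpace E] [Preorder E] : Prop :=
  ∀ K : Set E, IsCompact K → IsCompact (↑(lowerClosure K) ∩ ↑(upperClosure K) : Set E)

theorem image_val_interior_inter_interior_subset {X : Type*} [TopologicalSpace X] {K : Set X}
    (t : Set K) : (↑) '' interior t ∩ interior K ⊆ interior ((↑) '' t : Set X) := by
  obtain ⟨G, hG, hGt⟩ := isOpen_induced_iff.1 (isOpen_interior (s := t))
  have hsub : G ∩ interior K ⊆ (↑) '' t := fun y ⟨hyG, hyK⟩ =>
    ⟨⟨y, interior_subset hyK⟩, interior_subset (hGt ▸ hyG : _), rfl⟩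
  rintro _ ⟨⟨x, hx, rfl⟩, hxK⟩
  exact interior_maximal hsub (hG.inter isOpen_interior) ⟨(hGt ▸ hx : x ∈ (↑) ⁻¹' G), hxK⟩

theorem isOpen_iUnion_of_subset_interior_succ {X : Type*} [TopologicalSpace X] {C : ℕ → Set X}
    (h : ∀ n, C n ⊆ interior (C (n + 1))) : IsOpen (⋃ n, C n) := by
  have hC : ⋃ n, C n = ⋃ n, interior (C (n + 1)) :=
    (iUnion_mono h).antisymm (iUnion_subset fun n => interior_subset.trans (subset_iUnion C _))
  exact hC ▸ isOpen_iUnion fun _ => isOpen_interior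

section Preorder

variable {E : Type*} [Preorder E]

theorem isLowerSet_iUnion_of_lowerClosure_inter_subset {K C : ℕ → Set E} (hK : Monotone K)
    (hKu : ∀ x, ∃ n, x ∈ K n) (hC : Monotone C) (h : ∀ n, ↑(lowerClosure (C n)) ∩ K n ⊆ C n) :
    IsLowerSet (⋃ n, C n) := by
  intro c z hzc hc
  obtain ⟨n, hn⟩ := mem_iUnion.1 hc
  obtain ⟨m, hm⟩ := hKu z
  exact mem_iUnion.2 ⟨max n m, h _ ⟨⟨c, hC (le_max_left n m) hn, hzc⟩, hK (le_max_right n m) hm⟩⟩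

theorem isUpperSet_iUnion_of_upperClosure_inter_subset {K D : ℕ → Set E} (hK : Monotone K)
    (hKu : ∀ x, ∃ n, x ∈ K n) (hD : Monotone D) (h : ∀ n, ↑(upperClosure (D n)) ∩ K n ⊆ D n) :
    IsUpperSet (⋃ n, D n) := by
  intro d z hdz hd
  obtain ⟨n, hn⟩ := mem_iUnion.1 hd
  obtain ⟨m, hm⟩ := hKu z
  exact mem_iUnion.2 ⟨max n m, h _ ⟨⟨d, hD (le_max_left n m) hn, hdz⟩, hK (le_max_right n m) hm⟩⟩

theorem decHull_eq_self_iff {U : Set E} :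
    decHull U = U ↔ IsLowerSet U :=
  ⟨fun h => h ▸ (lowerClosure U).lower, IsLowerSet.lowerClosure⟩

theorem incHull_eq_self_iff {V : Set E} :
    incHull V = V ↔ IsUpperSet V :=
  ⟨fun h => h ▸ (upperClosure V).upper, IsUpperSet.upperClosure⟩

theorem incHull_singleton (x : E) : incHull {x} = Ici x := by
  ext; simp [incHull]

theorem decHull_singleton (x : E) : decHull {x} = Iic x := by
  ext; simp [decHull]

end Preorder

section Topology

variable {E : Type*} [TopologicalSpace E] [Preorder E]

theorem IsKPreserving.exists_ordConnected_exhaustion [WeaklyLocallyCompactSpace E]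
    [SigmaCompactSpace E] (hkp : IsKPreserving E) {S : Set E} (hS : IsCompact S) :
    ∃ K : ℕ → Set E, (∀ n, IsCompact (K n)) ∧ (∀ n, (K n).OrdConnected) ∧
      (∀ n, K n ⊆ interior (K (n + 1))) ∧ (∀ x, ∃ n, x ∈ K n) ∧ S ⊆ interior (K 0) := by
  have hhull : ∀ T : Set E, IsCompact T →
      ∃ T' : Set E, IsCompact T' ∧ T'.OrdConnected ∧ T ⊆ interior T' := by
    intro T hT
    obtain ⟨T', hT'c, hTT'⟩ := exists_compact_superset hT
    exact ⟨_, hkp T' hT'c,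
      (lowerClosure T').lower.ordConnected.inter (upperClosure T').upper.ordConnected,
      hTT'.trans (interior_mono (subset_inter subset_lowerClosure subset_upperClosure))⟩
  choose! g hgc hgo hgi using hhull
  let T : ℕ → Set E := fun n => Nat.rec S (fun n Tn => g Tn ∪ compactCovering E n) n
  have hT : ∀ n, IsCompact (T n) := by
    intro n
    induction n with
    | zero => exact hS
    | succ n ih => exact (hgc _ ih).union (isCompact_compactCovering E n)
  refine ⟨fun n => g (T n), fun n => hgc _ (hT n), fun n => hgo _ (hT n),
    fun n => subset_union_left.trans (hgi _ (hT (n + 1))), fun x => ?_, hgi _ hS⟩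
  obtain ⟨n, hn⟩ := exists_mem_compactCovering x
  exact ⟨n + 1, interior_subset (hgi _ (hT (n + 1)) (subset_union_right hn))⟩

-- `C` and `D` are the traces on `K` of the lower and upper sets under construction.
structure SeparationStage (A B O K C D : Set E) : Prop where
  isCompact_lower : IsCompact C
  isCompact_upper : IsCompact D
  lower_subset : C ⊆ K
  upper_subset : D ⊆ K
  lowerClosure_inter_subset : ↑(lowerClosure C) ∩ K ⊆ C
  upperClosure_inter_subset : ↑(upperClosure D) ∩ K ⊆ D
  inter_subset_lower : A ∩ K ⊆ C
  inter_subset_upper : B ∩ K ⊆ D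
  lower_inter_upper_subset : C ∩ D ⊆ O

variable {A B O : Set E}

theorem SeparationStage.hull_inter_subset {K C D : Set E} (h : SeparationStage A B O K C D)
    (hK : K.OrdConnected) (hA : IsLowerSet A) (hB : IsUpperSet B) (hABO : A ∩ B ⊆ O)
    (hAO : A ∩ ↑(upperClosure O) ⊆ K) (hBO : B ∩ ↑(lowerClosure O) ⊆ K) :
    (A ∪ ↑(lowerClosure C)) ∩ (B ∪ ↑(upperClosure D)) ⊆ O := by
  rintro z ⟨hzA | ⟨c, hc, hzc⟩, hzB | ⟨d, hd, hdz⟩⟩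
  · exact hABO ⟨hzA, hzB⟩
  · -- `d ∈ A ∩ K ⊆ C`, so `d ∈ C ∩ D ⊆ O`, which puts `z` in `K`
    have hdO : d ∈ O :=
      h.lower_inter_upper_subset ⟨h.inter_subset_lower ⟨hA hdz hzA, h.upper_subset hd⟩, hd⟩
    have hzK : z ∈ K := hAO ⟨hzA, d, hdO, hdz⟩
    exact h.lower_inter_upper_subset
      ⟨h.inter_subset_lower ⟨hzA, hzK⟩, h.upperClosure_inter_subset ⟨⟨d, hd, hdz⟩, hzK⟩⟩
  · have hcO : c ∈ O :=
      h.lower_inter_upper_subset ⟨hc, h.inter_subset_upper ⟨hB hzc hzB, h.lower_subset hc⟩⟩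
    have hzK : z ∈ K := hBO ⟨hzB, c, hcO, hzc⟩
    exact h.lower_inter_upper_subset
      ⟨h.lowerClosure_inter_subset ⟨⟨c, hc, hzc⟩, hzK⟩, h.inter_subset_upper ⟨hzB, hzK⟩⟩
  · have hzK : z ∈ K := hK.out (h.upper_subset hd) (h.lower_subset hc) ⟨hdz, hzc⟩
    exact h.lower_inter_upper_subset ⟨h.lowerClosure_inter_subset ⟨⟨c, hc, hzc⟩, hzK⟩,
      h.upperClosure_inter_subset ⟨⟨d, hd, hdz⟩, hzK⟩⟩

variable [OrderClosedTopology E]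

theorem IsCompact.isClosed_upperClosure {K : Set E} (hK : IsCompact K) :
    IsClosed (upperClosure K : Set E) := by
  refine isOpen_compl_iff.1 (isOpen_iff_forall_mem_open.2 fun y hy => ?_)
  have hsub : K ×ˢ {y} ⊆ {p : E × E | p.1 ≤ p.2}ᶜ := by
    rintro ⟨k, _⟩ ⟨hk, rfl⟩ hky
    exact hy ⟨k, hk, hky⟩
  obtain ⟨u, v, -, hv, hKu, hyv, huv⟩ :=
    generalized_tube_lemma hK isCompact_singleton isClosed_le_prod.isOpen_compl hsub
  exact ⟨v, fun z hz ⟨k, hk, hkz⟩ => huv (mk_mem_prod (hKu hk) hz) hkz, hv, hyv rfl⟩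

theorem IsCompact.isClosed_lowerClosure {K : Set E} (hK : IsCompact K) :
    IsClosed (lowerClosure K : Set E) :=
  IsCompact.isClosed_upperClosure (E := Eᵒᵈ) hK

theorem exists_open_lower_upper_separation [CompactSpace E]
    (hAc : IsClosed A) (hA : IsLowerSet A) (hBc : IsClosed B) (hB : IsUpperSet B)
    (hAB : Disjoint A B) :
    ∃ U V : Set E, IsOpen U ∧ IsLowerSet U ∧ IsOpen V ∧ IsUpperSet V ∧ A ⊆ U ∧ B ⊆ V ∧
      Disjoint U V := by
  have hsub : B ×ˢ A ⊆ {p : E × E | p.1 ≤ p.2}ᶜ := fun p ⟨hb, ha⟩ hle =>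
    disjoint_left.1 hAB (hA hle ha) hb
  obtain ⟨P, Q, hP, hQ, hBP, hAQ, hPQ⟩ := generalized_tube_lemma hBc.isCompact hAc.isCompact
    isClosed_le_prod.isOpen_compl hsub
  -- no point of `P` lies below a point of `Q`, while `U ⊆ Q` and `V ⊆ P`
  refine ⟨(upperClosure Qᶜ : Set E)ᶜ, (lowerClosure Pᶜ : Set E)ᶜ,
    hQ.isClosed_compl.isCompact.isClosed_upperClosure.isOpen_compl, (upperClosure Qᶜ).upper.compl,
    hP.isClosed_compl.isCompact.isClosed_lowerClosure.isOpen_compl, (lowerClosure Pᶜ).lower.compl,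
    ?_, ?_, disjoint_left.2 fun z hzU hzV => hPQ (mk_mem_prod (a := z) (b := z) ?_ ?_) le_rfl⟩
  · rintro a ha ⟨q, hq, hqa⟩
    exact hq (hAQ (hA hqa ha))
  · rintro b hb ⟨p, hp, hbp⟩
    exact hp (hBP (hB hbp hb))
  · by_contra h
    exact hzV ⟨z, h, le_rfl⟩
  · by_contra h
    exact hzU ⟨z, h, le_rfl⟩

theorem exists_closed_lower_upper_inter_subset [CompactSpace E]
    (hAc : IsClosed A) (hA : IsLowerSet A) (hBc : IsClosed B) (hB : IsUpperSet B)
    (hO : IsOpen O) (hABO : A ∩ B ⊆ O) :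
    ∃ C D : Set E, IsClosed C ∧ IsLowerSet C ∧ IsClosed D ∧ IsUpperSet D ∧
      A ⊆ interior C ∧ B ⊆ interior D ∧ C ∩ D ⊆ O := by
  suffices h : ∃ C D : Set E, IsClosed C ∧ IsLowerSet C ∧ IsClosed D ∧ IsUpperSet D ∧
      A ⊆ interior C ∧ B ⊆ interior D ∧ Disjoint (C ∩ D) Oᶜ by
    obtain ⟨C, D, hCc, hC, hDc, hD, hAC, hBD, hCD⟩ := h
    exact ⟨C, D, hCc, hC, hDc, hD, hAC, hBD, by simpa using hCD.subset_compl_right⟩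
  refine IsCompact.induction_on hO.isClosed_compl.isCompact ?_ ?_ ?_ ?_
  · exact ⟨univ, univ, isClosed_univ, isLowerSet_univ, isClosed_univ, isUpperSet_univ,
      by simp, by simp, disjoint_empty _⟩
  · rintro S T hST ⟨C, D, hCc, hC, hDc, hD, hAC, hBD, hCD⟩
    exact ⟨C, D, hCc, hC, hDc, hD, hAC, hBD, hCD.mono_right hST⟩
  · rintro S T ⟨C, D, hCc, hC, hDc, hD, hAC, hBD, hCD⟩
      ⟨C', D', hC'c, hC', hD'c, hD', hAC', hBD', hCD'⟩
    refine ⟨C ∩ C', D ∩ D', hCc.inter hC'c, hC.inter hC', hDc.inter hD'c, hD.inter hD',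
      (subset_inter hAC hAC').trans interior_inter.superset,
      (subset_inter hBD hBD').trans interior_inter.superset,
      disjoint_union_right.2 ⟨hCD.mono_left ?_, hCD'.mono_left ?_⟩⟩
    · exact inter_subset_inter inter_subset_left inter_subset_left
    · exact inter_subset_inter inter_subset_right inter_subset_right
  · intro x hxO
    by_cases hxA : x ∈ A
    · have hxB : x ∉ B := fun hxB => hxO (hABO ⟨hxA, hxB⟩)
      obtain ⟨U, V, hU, hUl, hV, hVu, hxU, hBV, hUV⟩ := exists_open_lower_upper_separation
        isClosed_Iic (isLowerSet_Iic x) hBc hB (disjoint_left.2 fun b hbx hb => hxB (hB hbx hb))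
      exact ⟨U, mem_nhdsWithin_of_mem_nhds (hU.mem_nhds (hxU (mem_Iic.2 le_rfl))), univ, Uᶜ,
        isClosed_univ, isLowerSet_univ, hU.isClosed_compl, hUl.compl, by simp,
        hBV.trans (interior_maximal hUV.subset_compl_left hV),
        disjoint_left.2 fun z hz hzU => hz.2 hzU⟩
    · obtain ⟨U, V, hU, hUl, hV, hVu, hAU, hxV, hUV⟩ := exists_open_lower_upper_separation
        hAc hA isClosed_Ici (isUpperSet_Ici x) (disjoint_left.2 fun a ha hxa => hxA (hA hxa ha))
      exact ⟨V, mem_nhdsWithin_of_mem_nhds (hV.mem_nhds (hxV (mem_Ici.2 le_rfl))), Vᶜ, univ,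
        hV.isClosed_compl, hVu.compl, isClosed_univ, isUpperSet_univ,
        hAU.trans (interior_maximal hUV.subset_compl_right hU), by simp,
        disjoint_left.2 fun z hz hzV => hz.1 hzV⟩

theorem exists_separationStage (hAc : IsClosed A) (hA : IsLowerSet A) (hBc : IsClosed B)
    (hB : IsUpperSet B) (hO : IsOpen O) {K C D : Set E} (hK : IsCompact K)
    (hC : IsCompact C) (hD : IsCompact D) (hCK : C ⊆ interior K) (hDK : D ⊆ interior K)
    (hCD : (A ∪ ↑(lowerClosure C)) ∩ (B ∪ ↑(upperClosure D)) ⊆ O) :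
    ∃ C' D', SeparationStage A B O K C' D' ∧ C ⊆ interior C' ∧ D ⊆ interior D' := by
  have : CompactSpace K := isCompact_iff_compactSpace.1 hK
  obtain ⟨C', D', hC'c, hC', hD'c, hD', hAC', hBD', hC'D'⟩ :=
    exists_closed_lower_upper_inter_subset (E := K)
      ((hAc.union hC.isClosed_lowerClosure).preimage continuous_subtype_val)
      ((hA.union (lowerClosure C).lower).preimage (Subtype.mono_coe _))
      ((hBc.union hD.isClosed_upperClosure).preimage continuous_subtype_val)
      ((hB.union (upperClosure D).upper).preimage (Subtype.mono_coe _))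
      (hO.preimage continuous_subtype_val) fun z hz => hCD hz
  refine ⟨(↑) '' C', (↑) '' D', ⟨hC'c.isCompact.image continuous_subtype_val,
    hD'c.isCompact.image continuous_subtype_val, Subtype.coe_image_subset _ _,
    Subtype.coe_image_subset _ _, ?_, ?_, ?_, ?_, ?_⟩, fun c hc => ?_, fun d hd => ?_⟩
  · rintro z ⟨⟨_, ⟨c, hc, rfl⟩, hzc⟩, hzK⟩
    exact ⟨⟨z, hzK⟩, hC' (show (⟨z, hzK⟩ : K) ≤ c from hzc) hc, rfl⟩
  · rintro z ⟨⟨_, ⟨d, hd, rfl⟩, hdz⟩, hzK⟩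
    exact ⟨⟨z, hzK⟩, hD' (show d ≤ (⟨z, hzK⟩ : K) from hdz) hd, rfl⟩
  · rintro a ⟨ha, haK⟩
    exact ⟨⟨a, haK⟩, interior_subset (hAC' (Or.inl ha)), rfl⟩
  · rintro b ⟨hb, hbK⟩
    exact ⟨⟨b, hbK⟩, interior_subset (hBD' (Or.inl hb)), rfl⟩
  · rw [← image_inter Subtype.val_injective]
    exact (image_mono hC'D').trans (image_preimage_subset _ _)
  · exact image_val_interior_inter_interior_subset C'
      ⟨⟨⟨c, interior_subset (hCK hc)⟩, hAC' (Or.inr (subset_lowerClosure hc)), rfl⟩, hCK hc⟩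
  · exact image_val_interior_inter_interior_subset D'
      ⟨⟨⟨d, interior_subset (hDK hd)⟩, hBD' (Or.inr (subset_upperClosure hd)), rfl⟩, hDK hd⟩

theorem exists_open_lower_upper_of_exhaustion {K : ℕ → Set E} (hKc : ∀ n, IsCompact (K n))
    (hKo : ∀ n, (K n).OrdConnected) (hKi : ∀ n, K n ⊆ interior (K (n + 1)))
    (hKu : ∀ x, ∃ n, x ∈ K n) (hAc : IsClosed A) (hA : IsLowerSet A) (hBc : IsClosed B)
    (hB : IsUpperSet B) (hO : IsOpen O) (hABO : A ∩ B ⊆ O)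
    (hAO : A ∩ ↑(upperClosure O) ⊆ K 0) (hBO : B ∩ ↑(lowerClosure O) ⊆ K 0) :
    ∃ U V : Set E, IsOpen U ∧ IsLowerSet U ∧ IsOpen V ∧ IsUpperSet V ∧ A ⊆ U ∧ B ⊆ V ∧
      U ∩ V ⊆ O := by
  have hKm : Monotone K := monotone_nat_of_le_succ fun n => (hKi n).trans interior_subset
  have hnext : ∀ n (p : Set E × Set E), SeparationStage A B O (K n) p.1 p.2 →
      ∃ q : Set E × Set E, SeparationStage A B O (K (n + 1)) q.1 q.2 ∧
        p.1 ⊆ interior q.1 ∧ p.2 ⊆ interior q.2 := fun n p hp => by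
    obtain ⟨C', D', h⟩ := exists_separationStage hAc hA hBc hB hO (hKc (n + 1))
      hp.isCompact_lower hp.isCompact_upper (hp.lower_subset.trans (hKi n))
      (hp.upper_subset.trans (hKi n)) (hp.hull_inter_subset (hKo n) hA hB hABO
        (hAO.trans (hKm n.zero_le)) (hBO.trans (hKm n.zero_le)))
    exact ⟨(C', D'), h⟩
  choose! next hnext using hnext
  obtain ⟨C₀, D₀, h₀, -⟩ := exists_separationStage hAc hA hBc hB hO (hKc 0) isCompact_empty
    isCompact_empty (empty_subset _) (empty_subset _) (by simpa using hABO)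
  let S : ℕ → Set E × Set E := fun n => Nat.rec (C₀, D₀) next n
  have hS : ∀ n, SeparationStage A B O (K n) (S n).1 (S n).2 := by
    intro n
    induction n with
    | zero => exact h₀
    | succ n ih => exact (hnext n _ ih).1
  have hCi : ∀ n, (S n).1 ⊆ interior (S (n + 1)).1 := fun n => (hnext n _ (hS n)).2.1
  have hDi : ∀ n, (S n).2 ⊆ interior (S (n + 1)).2 := fun n => (hnext n _ (hS n)).2.2
  have hCm : Monotone fun n => (S n).1 :=
    monotone_nat_of_le_succ fun n => (hCi n).trans interior_subset
  have hDm : Monotone fun n => (S n).2 :=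
    monotone_nat_of_le_succ fun n => (hDi n).trans interior_subset
  refine ⟨⋃ n, (S n).1, ⋃ n, (S n).2, isOpen_iUnion_of_subset_interior_succ hCi,
    isLowerSet_iUnion_of_lowerClosure_inter_subset hKm hKu hCm
      fun n => (hS n).lowerClosure_inter_subset,
    isOpen_iUnion_of_subset_interior_succ hDi,
    isUpperSet_iUnion_of_upperClosure_inter_subset hKm hKu hDm
      fun n => (hS n).upperClosure_inter_subset, fun a ha => ?_, fun b hb => ?_, ?_⟩
  · obtain ⟨n, hn⟩ := hKu a
    exact mem_iUnion.2 ⟨n, (hS n).inter_subset_lower ⟨ha, hn⟩⟩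
  · obtain ⟨n, hn⟩ := hKu b
    exact mem_iUnion.2 ⟨n, (hS n).inter_subset_upper ⟨hb, hn⟩⟩
  · rintro z ⟨hzC, hzD⟩
    obtain ⟨n, hn⟩ := mem_iUnion.1 hzC
    obtain ⟨m, hm⟩ := mem_iUnion.1 hzD
    exact (hS (max n m)).lower_inter_upper_subset
      ⟨hCm (le_max_left n m) hn, hDm (le_max_right n m) hm⟩

theorem IsKPreserving.exists_open_lower_upper_separation [WeaklyLocallyCompactSpace E]
    [SigmaCompactSpace E] (hkp : IsKPreserving E) (hAc : IsClosed A) (hA : IsLowerSet A)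
    (hBc : IsClosed B) (hB : IsUpperSet B) (hAB : Disjoint A B) :
    ∃ U V : Set E, IsOpen U ∧ IsLowerSet U ∧ IsOpen V ∧ IsUpperSet V ∧ A ⊆ U ∧ B ⊆ V ∧
      Disjoint U V := by
  obtain ⟨K, hKc, hKo, hKi, hKu, -⟩ := hkp.exists_ordConnected_exhaustion isCompact_empty
  obtain ⟨U, V, hU, hUl, hV, hVu, hAU, hBV, hUV⟩ := exists_open_lower_upper_of_exhaustion
    hKc hKo hKi hKu hAc hA hBc hB isOpen_empty hAB.inter_eq.subset (by simp) (by simp)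
  exact ⟨U, V, hU, hUl, hV, hVu, hAU, hBV, disjoint_iff_inter_eq_empty.2 (subset_empty_iff.1 hUV)⟩

end Topology

theorem IsKPreserving.exists_open_lower_upper_inter_subset {E : Type*} [TopologicalSpace E]
    [PartialOrder E] [OrderClosedTopology E] [WeaklyLocallyCompactSpace E] [SigmaCompactSpace E]
    (hkp : IsKPreserving E) {x : E} {O : Set E} (hO : IsOpen O) (hx : x ∈ O) :
    ∃ U V : Set E, IsOpen U ∧ IsLowerSet U ∧ IsOpen V ∧ IsUpperSet V ∧ x ∈ U ∧ x ∈ V ∧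
      U ∩ V ⊆ O := by
  obtain ⟨K, hKc, hKo, hKi, hKu, hxK⟩ :=
    hkp.exists_ordConnected_exhaustion (isCompact_singleton (x := x))
  have hxK : x ∈ interior (K 0) := hxK rfl
  have hxO : Iic x ∩ Ici x ⊆ O ∩ interior (K 0) := by
    rintro z ⟨hzx, hxz⟩
    rw [le_antisymm hzx hxz]
    exact ⟨hx, hxK⟩
  have hIic : Iic x ∩ ↑(upperClosure (O ∩ interior (K 0))) ⊆ K 0 := by
    rintro z ⟨hzx, o, ⟨-, ho⟩, hoz⟩
    exact (hKo 0).out (interior_subset ho) (interior_subset hxK) ⟨hoz, hzx⟩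
  have hIci : Ici x ∩ ↑(lowerClosure (O ∩ interior (K 0))) ⊆ K 0 := by
    rintro z ⟨hxz, o, ⟨-, ho⟩, hzo⟩
    exact (hKo 0).out (interior_subset hxK) (interior_subset ho) ⟨hxz, hzo⟩
  obtain ⟨U, V, hU, hUl, hV, hVu, hxU, hxV, hUV⟩ := exists_open_lower_upper_of_exhaustion
    hKc hKo hKi hKu isClosed_Iic (isLowerSet_Iic x) isClosed_Ici (isUpperSet_Ici x)
    (hO.inter isOpen_interior) hxO hIic hIci
  exact ⟨U, V, hU, hUl, hV, hVu, hxU (mem_Iic.2 le_rfl), hxV (mem_Ici.2 le_rfl),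
    hUV.trans inter_subset_left⟩

/-- Every k-preserving closed ordered space whose topology is locally compact
and σ-compact is convex and normally ordered. -/
theorem convex_normallyOrdered_of_kPreserving {E : Type*} [TopologicalSpace E]
    [Preorder E]
    (hG : IsClosed {p : E × E | p.1 ≤ p.2})
    (hanti : ∀ a b : E, a ≤ b → b ≤ a → a = b)
    (hkp : ∀ K : Set E, IsCompact K → IsCompact (decHull K ∩ incHull K))
    (hloc : ∀ x : E, ∃ K : Set E, IsCompact K ∧ K ∈ 𝓝 x)
    (hsigma : ∃ K : ℕ → Set E, (∀ n, IsCompact (K n)) ∧ (⋃ n, K n) = Set.univ) :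
    (∀ x : E, ∀ O : Set E, IsOpen O → x ∈ O →
      ∃ U V : Set E, IsOpen U ∧ decHull U = U ∧ IsOpen V ∧ incHull V = V ∧
        x ∈ U ∩ V ∧ U ∩ V ⊆ O) ∧
    (∀ x : E, IsClosed (incHull {x}) ∧ IsClosed (decHull {x})) ∧
    (∀ A B : Set E, IsClosed A → decHull A = A → IsClosed B → incHull B = B →
      A ∩ B = ∅ →
      ∃ U V : Set E, IsOpen U ∧ decHull U = U ∧ IsOpen V ∧ incHull V = V ∧
        A ⊆ U ∧ B ⊆ V ∧ U ∩ V = ∅) := by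
  let _ : PartialOrder E := { ‹Preorder E› with le_antisymm := hanti }
  have : OrderClosedTopology E := ⟨hG⟩
  have : WeaklyLocallyCompactSpace E := ⟨hloc⟩
  have : SigmaCompactSpace E := ⟨hsigma⟩
  have hkp : IsKPreserving E := hkp
  refine ⟨fun x O hO hx => ?_, fun x => ?_, fun A B hAc hA hBc hB hAB => ?_⟩
  · obtain ⟨U, V, hU, hUl, hV, hVu, hxU, hxV, hUV⟩ :=
      hkp.exists_open_lower_upper_inter_subset hO hx
    exact ⟨U, V, hU, decHull_eq_self_iff.2 hUl, hV, incHull_eq_self_iff.2 hVu, ⟨hxU, hxV⟩, hUV⟩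
  · rw [incHull_singleton, decHull_singleton]
    exact ⟨isClosed_Ici, isClosed_Iic⟩
  · obtain ⟨U, V, hU, hUl, hV, hVu, hAU, hBV, hUV⟩ :=
      hkp.exists_open_lower_upper_separation hAc (decHull_eq_self_iff.1 hA) hBc
        (incHull_eq_self_iff.1 hB) (disjoint_iff_inter_eq_empty.2 hAB)
    exact ⟨U, V, hU, decHull_eq_self_iff.2 hUl, hV, incHull_eq_self_iff.2 hVu, hAU, hBV,
      disjoint_iff_inter_eq_empty.1 hUV⟩
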